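/- arXiv:1802.09312 — 2 statements merged into one kernel-verified Lean document; each statement's English description precedes it below -/
import Mathlib

section
/- Cycle-with-chord reducibility: Let k = 3 and let G be a graph containing a cycle C all of whose vertices have degree 3 in G, such that C has a chord and at least one vertex of C has a neighbor outside V(C). Then for every cover of G with lists of size 3, any DP-3-coloring of G − V(C) extends to a DP-3-coloring of G. -/
/-- A DP-cover (matching assignment) of a graph `G` with all lists of size `k`:
a graph `H` on `V × Fin k` where each list `{v} × Fin k` is a clique, edges between
distinct lists only join lists of adjacent vertices of `G`, and between two lists the
edges form a (partial) matching. -/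
structure DPCover {V : Type*} (G : SimpleGraph V) (k : ℕ) where
  H : SimpleGraph (V × Fin k)
  list_clique : ∀ (v : V) (i j : Fin k), i ≠ j → H.Adj (v, i) (v, j)
  cross_adj : ∀ (u v : V) (i j : Fin k), u ≠ v → H.Adj (u, i) (v, j) → G.Adj u v
  matching₁ : ∀ (u v : V) (i j j' : Fin k), u ≠ v →
    H.Adj (u, i) (v, j) → H.Adj (u, i) (v, j') → j = j'

/-- An `M_L`-coloring: a transversal `f` choosing one color per vertex whose image is an
independent set in the cover graph. -/
def DPCover.IsColoring {V : Type*} {G : SimpleGraph V} {k : ℕ}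
    (C : DPCover G k) (f : V → Fin k) : Prop :=
  ∀ u v : V, u ≠ v → ¬ C.H.Adj (u, f u) (v, f v)

/-- `G` is DP-`k`-colorable if every cover with lists of size `k` admits a coloring. -/
def DPColorable {V : Type*} (G : SimpleGraph V) (k : ℕ) : Prop :=
  ∀ C : DPCover G k, ∃ f : V → Fin k, C.IsColoring f

/-!
Choose a chord end `w a` whose predecessor `w (a - 1)` is not a chord end; one exists because the
vertex with a neighbour outside the cycle is not a chord end. Then `x = w (a + 1)` and
`y = w (a - 1)` are non-adjacent, and the neighbours of `w a` are `x`, `y` and its chord partner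
`w b`. Color `x` and `y` first: each has at most one outside neighbour, hence two admissible
colors, and among these we can pick colors that together forbid at most one color at `w a`.
Next color the remaining cycle vertices greedily along the two arcs towards `w b`: when a vertex
is colored, its neighbour towards `w b` (or `w a`, for `w b` itself) is still uncolored, so at
most two of its colors are forbidden. Finally `w a` has at most two forbidden colors.
-/

theorem Fin.exists_notMem_of_card_lt {k : ℕ} {s : Finset (Fin k)} (h : s.card < k) :
    ∃ c, c ∉ s := by
  obtain ⟨c, -, hc⟩ := Finset.exists_mem_notMem_of_card_lt_card (s := s) (t := Finset.univ)
    (by simpa using h)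
  exact ⟨c, hc⟩

theorem ZMod.exists_and_not_sub_one {n : ℕ} [NeZero n] {P : ZMod n → Prop} (h : ∃ i, P i)
    (h' : ∃ i, ¬ P i) : ∃ i, P i ∧ ¬ P (i - 1) := by
  obtain ⟨i, hi⟩ := h
  obtain ⟨e, he⟩ := h'
  by_contra! hP
  have hall : ∀ m : ℕ, P (i - m) := by
    intro m
    induction m with
    | zero => simpa using hi
    | succ m ih => simpa [sub_sub] using hP _ ih
  exact he (by simpa using hall (i - e).val)

theorem ZMod.natCast_ne_zero_of_lt {n m : ℕ} (h0 : m ≠ 0) (hm : m < n) : (m : ZMod n) ≠ 0 :=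
  fun h => absurd (Nat.le_of_dvd (Nat.pos_of_ne_zero h0) ((ZMod.natCast_eq_zero_iff m n).1 h))
    (by omega)

theorem Set.exists_sdiff_pair_eq_singleton {α : Type*} {s : Set α} {a b : α} (hs : s.ncard = 3)
    (ha : a ∈ s) (hb : b ∈ s) (hab : a ≠ b) : ∃ c, s \ {a, b} = {c} := by
  rw [← Set.ncard_eq_one, Set.ncard_sdiff (Set.insert_subset ha (Set.singleton_subset_iff.2 hb)),
    hs, Set.ncard_pair hab]

namespace DPCover

variable {V : Type*} {G : SimpleGraph V} {k : ℕ}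

def IsColoringOn (D : DPCover G k) (S : Set V) (f : V → Fin k) : Prop :=
  ∀ u ∈ S, ∀ v ∈ S, u ≠ v → ¬ D.H.Adj (u, f u) (v, f v)

theorem isColoringOn_univ (D : DPCover G k) {f : V → Fin k} :
    D.IsColoringOn Set.univ f ↔ D.IsColoring f := by
  simp [IsColoringOn, IsColoring]

open Classical in
noncomputable def blocked (D : DPCover G k) (S : Set V) (f : V → Fin k) (v : V) :
    Finset (Fin k) :=
  {c | ∃ u ∈ S, u ≠ v ∧ D.H.Adj (v, c) (u, f u)}

variable {D : DPCover G k} {S : Set V} {f : V → Fin k} {v : V}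

theorem mem_blocked {c : Fin k} :
    c ∈ D.blocked S f v ↔ ∃ u ∈ S, u ≠ v ∧ D.H.Adj (v, c) (u, f u) := by
  simp [blocked]

/-- Each vertex blocks at most one color of `v`, the cover being a matching between lists. -/
theorem card_blocked_le (P : Finset V) (hP : ∀ u ∈ S, G.Adj v u → u ∈ P) :
    (D.blocked S f v).card ≤ P.card := by
  classical
  exact Finset.card_le_card_of_forall_subsingleton (fun c u => u ≠ v ∧ D.H.Adj (v, c) (u, f u))
    (fun c hc => by
      obtain ⟨u, hu, huv, h⟩ := mem_blocked.1 hc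
      exact ⟨u, hP u hu (D.cross_adj v u c (f u) huv.symm h), huv, h⟩)
    (fun u _ c ⟨_, huv, h⟩ c' ⟨_, _, h'⟩ => D.matching₁ u v (f u) c c' huv h.symm h'.symm)

theorem exists_notMem_blocked (P : Finset V) (hP : ∀ u ∈ S, G.Adj v u → u ∈ P)
    (hk : P.card < k) : ∃ c, c ∉ D.blocked S f v :=
  Fin.exists_notMem_of_card_lt ((card_blocked_le P hP).trans_lt hk)

/-- If no such pair exists, every admissible color of `x` is matched to a color of `v` outside
the set `N` of partners of admissible colors of `y`, whence `(k - |Bx|) + (k - |By|) ≤ k`. -/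
theorem exists_colors_agree_at {x y : V} (hxv : x ≠ v) (hyv : y ≠ v) {Bx By : Finset (Fin k)}
    (hB : Bx.card + By.card < k) :
    ∃ cx ∉ Bx, ∃ cy ∉ By,
      ∀ d d', D.H.Adj (x, cx) (v, d) → D.H.Adj (y, cy) (v, d') → d = d' := by
  classical
  by_contra! h
  obtain ⟨cx₀, hcx₀⟩ := Fin.exists_notMem_of_card_lt (s := Bx) (by omega)
  obtain ⟨cy₀, hcy₀⟩ := Fin.exists_notMem_of_card_lt (s := By) (by omega)
  let N : Finset (Fin k) := {d | ∃ cy ∉ By, D.H.Adj (y, cy) (v, d)}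
  have hN : Byᶜ.card ≤ N.card := by
    refine Finset.card_le_card_of_forall_subsingleton (fun cy d => D.H.Adj (y, cy) (v, d))
      (fun cy hcy => ?_)
      (fun d _ c ⟨_, hc⟩ c' ⟨_, hc'⟩ => D.matching₁ v y d c c' hyv.symm hc.symm hc'.symm)
    obtain ⟨-, d, -, hd, -⟩ := h cx₀ hcx₀ cy (Finset.mem_compl.1 hcy)
    exact ⟨d, Finset.mem_filter.2 ⟨Finset.mem_univ _, cy, Finset.mem_compl.1 hcy, hd⟩, hd⟩
  have hNc : Bxᶜ.card ≤ Nᶜ.card := by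
    refine Finset.card_le_card_of_forall_subsingleton (fun cx d => D.H.Adj (x, cx) (v, d))
      (fun cx hcx => ?_)
      (fun d _ c ⟨_, hc⟩ c' ⟨_, hc'⟩ => D.matching₁ v x d c c' hxv.symm hc.symm hc'.symm)
    obtain ⟨d, -, hd, -, -⟩ := h cx (Finset.mem_compl.1 hcx) cy₀ hcy₀
    refine ⟨d, Finset.mem_compl.2 fun hdN => ?_, hd⟩
    obtain ⟨cy, hcy, hd'⟩ := (Finset.mem_filter.1 hdN).2
    obtain ⟨e, e', he, he', hne⟩ := h cx (Finset.mem_compl.1 hcx) cy hcy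
    exact hne ((D.matching₁ x v cx e d hxv he hd).trans (D.matching₁ y v cy d e' hyv hd' he'))
  have hNk : N.card ≤ k := by simpa using N.card_le_univ
  simp only [Finset.card_compl, Fintype.card_fin] at hN hNc
  omega

theorem exists_notMem_blocked_of_agree (hk : 2 < k) {x y p : V} (hxv : x ≠ v) (hyv : y ≠ v)
    (hpv : p ≠ v) (hN : ∀ u, G.Adj v u → u = x ∨ u = y ∨ u = p)
    (hagree : ∀ d d', D.H.Adj (x, f x) (v, d) → D.H.Adj (y, f y) (v, d') → d = d') :
    ∃ c, c ∉ D.blocked S f v := by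
  classical
  let A : Finset (Fin k) := {c | D.H.Adj (v, c) (x, f x) ∨ D.H.Adj (v, c) (y, f y)}
  let B : Finset (Fin k) := {c | D.H.Adj (v, c) (p, f p)}
  have hA : A.card ≤ 1 := Finset.card_le_one.2 fun c hc c' hc' => by
    simp only [A, Finset.mem_filter, Finset.mem_univ, true_and] at hc hc'
    rcases hc with hc | hc <;> rcases hc' with hc' | hc'
    · exact D.matching₁ x v _ c c' hxv hc.symm hc'.symm
    · exact hagree c c' hc.symm hc'.symm
    · exact (hagree c' c hc'.symm hc.symm).symm
    · exact D.matching₁ y v _ c c' hyv hc.symm hc'.symm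
  have hB : B.card ≤ 1 := Finset.card_le_one.2 fun c hc c' hc' => by
    simp only [B, Finset.mem_filter, Finset.mem_univ, true_and] at hc hc'
    exact D.matching₁ p v _ c c' hpv hc.symm hc'.symm
  have hsub : D.blocked S f v ⊆ A ∪ B := fun c hc => by
    obtain ⟨u, -, huv, h⟩ := mem_blocked.1 hc
    rcases hN u (D.cross_adj v u c (f u) huv.symm h) with rfl | rfl | rfl <;> simp [A, B, h]
  exact Fin.exists_notMem_of_card_lt
    (((Finset.card_le_card hsub).trans (Finset.card_union_le A B)).trans_lt (by omega))

section Update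

variable [DecidableEq V]

theorem IsColoringOn.insert_update (hf : D.IsColoringOn S f) {c : Fin k}
    (hc : c ∉ D.blocked S f v) : D.IsColoringOn (insert v S) (Function.update f v c) := by
  simp only [mem_blocked, not_exists, not_and] at hc
  rintro u hu u' hu' hne
  by_cases huv : u = v
  · subst huv
    rw [Function.update_self, Function.update_of_ne (Ne.symm hne)]
    exact hc u' (hu'.resolve_left (Ne.symm hne)) (Ne.symm hne)
  by_cases hu'v : u' = v
  · subst hu'v
    rw [Function.update_self, Function.update_of_ne huv]
    exact fun h => hc u (hu.resolve_left huv) huv h.symm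
  rw [Function.update_of_ne huv, Function.update_of_ne hu'v]
  exact hf u (hu.resolve_left huv) u' (hu'.resolve_left hu'v) hne

theorem blocked_insert_update_subset {x : V} (hvx : ¬ G.Adj v x) (c : Fin k) :
    D.blocked (insert x S) (Function.update f x c) v ⊆ D.blocked S f v := by
  intro c' hc'
  obtain ⟨u, hu, huv, h⟩ := mem_blocked.1 hc'
  have hux : u ≠ x := by
    rintro rfl
    exact hvx (D.cross_adj v u c' _ huv.symm h)
  rw [Function.update_of_ne hux] at h
  exact mem_blocked.2 ⟨u, hu.resolve_left hux, huv, h⟩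

end Update

theorem IsColoringOn.exists_update_agree_at (hf : D.IsColoringOn S f) {x y : V}
    (hxv : x ≠ v) (hyv : y ≠ v) (hxy : ¬ G.Adj x y)
    (hB : (D.blocked S f x).card + (D.blocked S f y).card < k) :
    ∃ g : V → Fin k, (∀ u, u ≠ x → u ≠ y → g u = f u) ∧
      D.IsColoringOn (insert y (insert x S)) g ∧
      ∀ d d', D.H.Adj (x, g x) (v, d) → D.H.Adj (y, g y) (v, d') → d = d' := by
  classical
  obtain ⟨cx, hcx, cy, hcy, hagree⟩ := exists_colors_agree_at (D := D) hxv hyv hB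
  refine ⟨Function.update (Function.update f x cx) y cy, fun u hux huy => ?_,
    (hf.insert_update hcx).insert_update fun h => hcy (blocked_insert_update_subset
      (fun h' => hxy h'.symm) cx h), ?_⟩
  · rw [Function.update_of_ne huy, Function.update_of_ne hux]
  · rcases eq_or_ne x y with rfl | hne
    · exact fun d d' h h' => D.matching₁ x v _ d d' hxv h h'
    · rw [Function.update_self, Function.update_of_ne hne, Function.update_self]
      exact hagree

/-- `T` is colored greedily in order of decreasing `ρ`: each vertex then still has an uncolored
neighbour, hence fewer than `k` colored ones. -/
theorem IsColoringOn.exists_extension (hf : D.IsColoringOn S f) (ρ : V → ℕ) (T : Finset V)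
    (hdeg : ∀ t ∈ T, (G.neighborSet t).encard ≤ k)
    (hlater : ∀ t ∈ T, ∃ u, G.Adj t u ∧ u ∉ S ∧ (u ∈ T → ρ u < ρ t)) :
    ∃ g : V → Fin k, (∀ u ∉ T, g u = f u) ∧ D.IsColoringOn (S ∪ T) g := by
  classical
  induction T using Finset.strongInduction with
  | H T ih =>
  rcases T.eq_empty_or_nonempty with rfl | hT
  · exact ⟨f, fun _ _ => rfl, by simpa using hf⟩
  obtain ⟨t, ht, hmin⟩ := T.exists_min_image ρ hT
  obtain ⟨g, hgf, hg⟩ := ih (T.erase t) (T.erase_ssubset ht)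
    (fun s hs => hdeg s (Finset.mem_of_mem_erase hs))
    (fun s hs => (hlater s (Finset.mem_of_mem_erase hs)).imp
      fun u ⟨hsu, huS, hρ⟩ => ⟨hsu, huS, fun hu => hρ (Finset.mem_of_mem_erase hu)⟩)
  obtain ⟨u, htu, huS, hρ⟩ := hlater t ht
  have huT : u ∉ T := fun hu => (hρ hu).not_ge (hmin u hu)
  obtain ⟨hfin, hcard⟩ := Set.encard_le_coe_iff_finite_ncard_le.1 (hdeg t ht)
  have hu : u ∈ hfin.toFinset := hfin.mem_toFinset.2 htu
  obtain ⟨c, hc⟩ := exists_notMem_blocked (D := D) (S := S ∪ ↑(T.erase t)) (f := g)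
    (hfin.toFinset.erase u)
    (fun z hz htz => Finset.mem_erase.2 ⟨by
      rintro rfl
      rcases hz with h | h
      exacts [huS h, huT (Finset.mem_of_mem_erase h)], hfin.mem_toFinset.2 htz⟩)
    (by
      have := Finset.card_erase_add_one hu
      rw [← Set.ncard_eq_toFinset_card _ hfin] at this
      omega)
  refine ⟨Function.update g t c, fun z hz => ?_, ?_⟩
  · rw [Function.update_of_ne (by rintro rfl; exact hz ht)]
    exact hgf z (fun h => hz (Finset.mem_of_mem_erase h))
  · convert hg.insert_update hc using 1
    ext z
    by_cases hzt : z = t <;> simp [hzt, ht]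

end DPCover

section Cycle

variable {V : Type*} {G : SimpleGraph V} {n : ℕ} {w : ZMod n → V}

def IsChordEnd (G : SimpleGraph V) (w : ZMod n → V) (i : ZMod n) : Prop :=
  ∃ j, G.Adj (w i) (w j) ∧ j ≠ i + 1 ∧ i ≠ j + 1

theorem four_le_of_isChordEnd (hn : 3 ≤ n) {i : ZMod n} (h : IsChordEnd G w i) : 4 ≤ n := by
  by_contra! hn4
  obtain rfl : n = 3 := by omega
  obtain ⟨j, hij, hj, hi⟩ := h
  have hcases : ∀ i j : ZMod 3, j ≠ i + 1 → i ≠ j + 1 → j = i := by decide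
  exact hij.ne (congrArg w (hcases i j hj hi).symm)

theorem not_adj_of_not_isChordEnd_sub_one (hn : 4 ≤ n) {a : ZMod n}
    (ha : ¬ IsChordEnd G w (a - 1)) : ¬ G.Adj (w (a + 1)) (w (a - 1)) := by
  have h1 : (1 : ZMod n) ≠ 0 := by
    exact_mod_cast ZMod.natCast_ne_zero_of_lt one_ne_zero (by omega)
  have h3 : (3 : ZMod n) ≠ 0 := by
    exact_mod_cast ZMod.natCast_ne_zero_of_lt (m := 3) (by norm_num) (by omega)
  exact fun h => ha ⟨a + 1, h.symm, fun h' => h1 (by linear_combination h'),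
    fun h' => h3 (by linear_combination -h')⟩

variable (hinj : Function.Injective w) (hcyc : ∀ i, G.Adj (w i) (w (i + 1)))
include hinj hcyc

theorem exists_third_neighbor (hn : 3 ≤ n) {i : ZMod n} (hdeg : (G.neighborSet (w i)).ncard = 3) :
    ∃ q, ∀ u, G.Adj (w i) u → u = w (i - 1) ∨ u = w (i + 1) ∨ u = q := by
  have h2 : (2 : ZMod n) ≠ 0 := by
    exact_mod_cast ZMod.natCast_ne_zero_of_lt two_ne_zero (by omega)
  have hprev : G.Adj (w i) (w (i - 1)) := by simpa using (hcyc (i - 1)).symm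
  have hne : w (i - 1) ≠ w (i + 1) := fun h => h2 (by linear_combination -hinj h)
  obtain ⟨q, hq⟩ := Set.exists_sdiff_pair_eq_singleton hdeg hprev (hcyc i) hne
  refine ⟨q, fun u hu => ?_⟩
  by_contra! h
  have : u ∈ G.neighborSet (w i) \ {w (i - 1), w (i + 1)} := by simp [hu, h.1, h.2.1]
  exact h.2.2 (by simpa [hq] using this)

theorem not_isChordEnd_of_adj_notMem_range (hn : 3 ≤ n) {i : ZMod n}
    (hdeg : (G.neighborSet (w i)).ncard = 3) {u : V} (hu : u ∉ Set.range w)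
    (hiu : G.Adj (w i) u) : ¬ IsChordEnd G w i := by
  rintro ⟨j, hij, hj, hi⟩
  obtain ⟨q, hq⟩ := exists_third_neighbor hinj hcyc hn hdeg
  obtain rfl : u = q := by
    rcases hq u hiu with rfl | rfl | rfl <;> first | rfl | exact absurd ⟨_, rfl⟩ hu
  rcases hq _ hij with h | h | h
  · exact hi (by rw [hinj h, sub_add_cancel])
  · exact hj (hinj h)
  · exact hu ⟨j, h⟩

theorem eq_or_eq_or_eq_of_adj_chord (hn : 3 ≤ n) {a b : ZMod n}
    (hdeg : (G.neighborSet (w a)).ncard = 3) (hab : G.Adj (w a) (w b)) (hb : b ≠ a + 1)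
    (ha : a ≠ b + 1) {u : V} (hu : G.Adj (w a) u) :
    u = w (a + 1) ∨ u = w (a - 1) ∨ u = w b := by
  obtain ⟨q, hq⟩ := exists_third_neighbor hinj hcyc hn hdeg
  obtain rfl : w b = q := by
    rcases hq _ hab with h | h | h
    · exact absurd (by rw [hinj h, sub_add_cancel]) ha
    · exact absurd (hinj h) hb
    · exact h
  rcases hq u hu with h | h | h <;> simp [h]

theorem card_blocked_compl_range_le_one {k : ℕ} (D : DPCover G k) (f : V → Fin k)
    (hn : 3 ≤ n) {i : ZMod n} (hdeg : (G.neighborSet (w i)).ncard = 3) :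
    (D.blocked (Set.range w)ᶜ f (w i)).card ≤ 1 := by
  classical
  obtain ⟨q, hq⟩ := exists_third_neighbor hinj hcyc hn hdeg
  refine (DPCover.card_blocked_le {q} fun u hu hiu => ?_).trans (Finset.card_singleton q).le
  rcases hq u hiu with rfl | rfl | rfl
  · exact absurd ⟨_, rfl⟩ hu
  · exact absurd ⟨_, rfl⟩ hu
  · exact Finset.mem_singleton_self u

/-- `ρ` is the distance to `w b` along the path `w (a + 1), …, w (a - 1)` left by deleting `w a`:
every vertex of that path other than `w (a ± 1)` has a neighbour closer to `w b`, or `w a`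
if it is `w b` itself. -/
theorem exists_rank_toward_chord [NeZero n] {a b : ZMod n} (hab : G.Adj (w a) (w b))
    (hb : b ≠ a + 1) (ha : a ≠ b + 1) :
    ∃ ρ : V → ℕ, ∀ i, i ≠ a → i ≠ a + 1 → i ≠ a - 1 →
      ∃ j, G.Adj (w i) (w j) ∧ j ≠ a + 1 ∧ j ≠ a - 1 ∧
        (j ≠ a → ρ (w j) < ρ (w i)) := by
  have hoff : ∀ m : ℕ, m < n → (a + m - a).val = m := fun m hm => by
    rw [add_sub_cancel_left, ZMod.val_natCast, Nat.mod_eq_of_lt hm]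
  have hinj' : ∀ m m' : ℕ, m < n → m' < n → a + (m : ZMod n) = a + m' → m = m' :=
    fun m m' hm hm' h => by rw [← hoff m hm, h, hoff m' hm']
  have hone : a + ((1 : ℕ) : ZMod n) = a + 1 := by rw [Nat.cast_one]
  have hlast : a + ((n - 1 : ℕ) : ZMod n) = a - 1 := by
    rw [Nat.cast_sub NeZero.one_le, ZMod.natCast_self]; ring
  have hzero : a + ((0 : ℕ) : ZMod n) = a := by rw [Nat.cast_zero, add_zero]
  obtain ⟨B, hB, rfl⟩ : ∃ B < n, b = a + B :=
    ⟨(b - a).val, ZMod.val_lt _, by rw [ZMod.natCast_zmod_val]; ring⟩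
  have hB0 : B ≠ 0 := by rintro rfl; exact hab.ne (by rw [hzero])
  have hB1 : B ≠ 1 := by rintro rfl; exact hb hone
  have hBn : B ≠ n - 1 := by rintro rfl; exact ha (by rw [hlast, sub_add_cancel])
  refine ⟨fun u => Nat.dist (Function.invFun w u - a).val B, fun i hia hi1 hi2 => ?_⟩
  obtain ⟨m, hm, rfl⟩ : ∃ m < n, i = a + m :=
    ⟨(i - a).val, ZMod.val_lt _, by rw [ZMod.natCast_zmod_val]; ring⟩
  have hρ : ∀ m' < n, Nat.dist (Function.invFun w (w (a + m')) - a).val B = Nat.dist m' B :=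
    fun m' hm' => by rw [Function.leftInverse_invFun hinj, hoff m' hm']
  have hm0 : m ≠ 0 := by rintro rfl; exact hia hzero
  have hm1 : m ≠ 1 := by rintro rfl; exact hi1 hone
  have hmn : m ≠ n - 1 := by rintro rfl; exact hi2 hlast
  have hne1 : ∀ m' < n, m' ≠ 1 → a + (m' : ZMod n) ≠ a + 1 :=
    fun m' hm' h1 h => h1 (hinj' m' 1 hm' (by omega) (h.trans hone.symm))
  have hne2 : ∀ m' < n, m' ≠ n - 1 → a + (m' : ZMod n) ≠ a - 1 :=
    fun m' hm' h1 h => h1 (hinj' m' (n - 1) hm' (by omega) (h.trans hlast.symm))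
  rcases lt_trichotomy m B with hlt | rfl | hgt
  · refine ⟨a + (m + 1 : ℕ), by simpa [add_assoc] using hcyc (a + m),
      hne1 (m + 1) (by omega) (by omega), hne2 (m + 1) (by omega) (by omega), fun _ => ?_⟩
    dsimp only
    rw [hρ m hm, hρ (m + 1) (by omega)]
    simp only [Nat.dist]
    omega
  · refine ⟨a, hab.symm, ?_, ?_, fun h => absurd rfl h⟩
    · simpa using hne1 0 (by omega) (by omega)
    · simpa using hne2 0 (by omega) (by omega)
  · refine ⟨a + (m - 1 : ℕ), ?_, hne1 (m - 1) (by omega) (by omega),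
      hne2 (m - 1) (by omega) (by omega), fun _ => ?_⟩
    · have e : ((m - 1 : ℕ) : ZMod n) + 1 = m := by
        rw [← Nat.cast_add_one, Nat.sub_one_add_one hm0]
      simpa [add_assoc, e] using (hcyc (a + (m - 1 : ℕ))).symm
    dsimp only
    rw [hρ m hm, hρ (m - 1) (by omega)]
    simp only [Nat.dist]
    omega

theorem exists_chord_not_adj (hn : 3 ≤ n) (hdeg : ∀ i, (G.neighborSet (w i)).ncard = 3)
    (hchord : ∃ i, IsChordEnd G w i)
    (hext : ∃ (i : ZMod n) (u : V), u ∉ Set.range w ∧ G.Adj (w i) u) :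
    ∃ a b, G.Adj (w a) (w b) ∧ b ≠ a + 1 ∧ a ≠ b + 1 ∧
      ¬ G.Adj (w (a + 1)) (w (a - 1)) := by
  have : NeZero n := ⟨by omega⟩
  obtain ⟨e, u, hu, heu⟩ := hext
  obtain ⟨a, ⟨b, hab, hb, ha⟩, ha'⟩ := ZMod.exists_and_not_sub_one hchord
    ⟨e, not_isChordEnd_of_adj_notMem_range hinj hcyc hn (hdeg e) hu heu⟩
  exact ⟨a, b, hab, hb, ha,
    not_adj_of_not_isChordEnd_sub_one (four_le_of_isChordEnd hn ⟨b, hab, hb, ha⟩) ha'⟩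

theorem exists_extension_compl_singleton [NeZero n] {k : ℕ} (hk : 3 ≤ k)
    (hdeg : ∀ i, (G.neighborSet (w i)).ncard = 3) {a b : ZMod n} (hab : G.Adj (w a) (w b))
    (hb : b ≠ a + 1) (ha : a ≠ b + 1) {D : DPCover G k} {f : V → Fin k}
    (hf : D.IsColoringOn (insert (w (a - 1)) (insert (w (a + 1)) (Set.range w)ᶜ)) f) :
    ∃ g : V → Fin k, Set.EqOn g f (insert (w (a - 1)) (insert (w (a + 1)) (Set.range w)ᶜ)) ∧
      D.IsColoringOn {w a}ᶜ g := by
  classical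
  obtain ⟨ρ, hρ⟩ := exists_rank_toward_chord hinj hcyc hab hb ha
  have ha1 : a + 1 ≠ a := fun h => (hcyc a).ne (by rw [h])
  have ha2 : a - 1 ≠ a := fun h => (hcyc (a - 1)).ne (by rw [sub_add_cancel, h])
  set T : Finset V := Finset.univ.image w \ {w a, w (a + 1), w (a - 1)} with hT
  have hmemT : ∀ i, w i ∈ T ↔ i ≠ a ∧ i ≠ a + 1 ∧ i ≠ a - 1 := fun i => by
    simp [hT, hinj.eq_iff]
  obtain ⟨g, hgf, hg⟩ := hf.exists_extension ρ T
    (fun t ht => by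
      obtain ⟨i, -, rfl⟩ := Finset.mem_image.1 (Finset.mem_sdiff.1 ht).1
      exact Set.encard_le_coe_iff_finite_ncard_le.2
        ⟨Set.finite_of_ncard_ne_zero (by simp [hdeg]), (hdeg i).trans_le hk⟩)
    (fun t ht => by
      obtain ⟨i, -, rfl⟩ := Finset.mem_image.1 (Finset.mem_sdiff.1 ht).1
      obtain ⟨hia, hi1, hi2⟩ := (hmemT i).1 ht
      obtain ⟨j, hij, hj1, hj2, hjρ⟩ := hρ i hia hi1 hi2
      exact ⟨w j, hij, by simp [hinj.eq_iff, hj1, hj2], fun hj => hjρ ((hmemT j).1 hj).1⟩)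
  refine ⟨g, fun u hu => hgf u fun huT => ?_, ?_⟩
  · obtain ⟨i, -, rfl⟩ := Finset.mem_image.1 (Finset.mem_sdiff.1 huT).1
    have := (hmemT i).1 huT
    simp_all [hinj.eq_iff]
  · convert hg using 1
    ext u
    by_cases hu : u ∈ Set.range w
    · obtain ⟨i, rfl⟩ := hu
      simp only [Set.mem_compl_iff, Set.mem_singleton_iff, Set.mem_union, Set.mem_insert_iff,
        Finset.mem_coe, hmemT, hinj.eq_iff, Set.mem_range_self, not_true_eq_false, or_false]
      rcases eq_or_ne i a with rfl | hia
      · simp [ha1.symm, ha2.symm]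
      · simp only [hia, not_false_eq_true, true_and, ne_eq, true_iff]
        tauto
    · simp only [Set.mem_compl_iff, Set.mem_singleton_iff, Set.mem_union, Set.mem_insert_iff, hu,
        not_false_eq_true, or_true, true_or, iff_true]
      rintro rfl
      exact hu ⟨a, rfl⟩

end Cycle

theorem cycle_with_chord_reducible_general {V : Type} (G : SimpleGraph V)
    (n : ℕ) (hn : 3 ≤ n) (w : ZMod n → V) (hinj : Function.Injective w)
    (hcyc : ∀ i : ZMod n, G.Adj (w i) (w (i + 1)))
    (hdeg : ∀ i : ZMod n, (G.neighborSet (w i)).ncard = 3)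
    (hchord : ∃ i j : ZMod n, G.Adj (w i) (w j) ∧ j ≠ i + 1 ∧ i ≠ j + 1)
    (hext : ∃ (i : ZMod n) (u : V), u ∉ Set.range w ∧ G.Adj (w i) u) :
    ∀ (C : DPCover G 3) (f₀ : V → Fin 3),
      (∀ u u' : V, u ≠ u' → u ∉ Set.range w → u' ∉ Set.range w →
        ¬ C.H.Adj (u, f₀ u) (u', f₀ u')) →
      ∃ f : V → Fin 3, (∀ u : V, u ∉ Set.range w → f u = f₀ u) ∧ C.IsColoring f := by
  intro D f₀ hf₀
  classical
  have : NeZero n := ⟨by omega⟩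
  obtain ⟨a, b, hab, hb, ha, hxy⟩ := exists_chord_not_adj hinj hcyc hn hdeg hchord hext
  have hxa : w (a + 1) ≠ w a := (hcyc a).ne.symm
  have hya : w (a - 1) ≠ w a := by simpa using (hcyc (a - 1)).ne
  have hf₀' : D.IsColoringOn (Set.range w)ᶜ f₀ := fun u hu u' hu' hne => hf₀ u u' hne hu hu'
  obtain ⟨f₁, hf₁f₀, hf₁, hagree⟩ := hf₀'.exists_update_agree_at hxa hya hxy (by
    have := card_blocked_compl_range_le_one hinj hcyc D f₀ hn (hdeg (a + 1))
    have := card_blocked_compl_range_le_one hinj hcyc D f₀ hn (hdeg (a - 1))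
    omega)
  obtain ⟨g, hgf₁, hg⟩ :=
    exists_extension_compl_singleton hinj hcyc le_rfl hdeg hab hb ha hf₁
  obtain ⟨c, hc⟩ := DPCover.exists_notMem_blocked_of_agree (D := D) (S := {w a}ᶜ) (f := g)
    (by norm_num) hxa hya hab.ne.symm
    (fun _ => eq_or_eq_or_eq_of_adj_chord hinj hcyc hn (hdeg a) hab hb ha)
    (by rwa [hgf₁ (by simp), hgf₁ (by simp)])
  refine ⟨Function.update g (w a) c, fun z hz => ?_, (D.isColoringOn_univ).1 ?_⟩
  · rw [Function.update_of_ne (by rintro rfl; exact hz ⟨a, rfl⟩), hgf₁ (by simp [hz]),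
      hf₁f₀ z (by rintro rfl; exact hz ⟨_, rfl⟩) (by rintro rfl; exact hz ⟨_, rfl⟩)]
  · simpa only [Set.insert_eq, Set.union_compl_self] using hg.insert_update hc

/-- Cycle-with-chord reducibility (k = 3). Let `G` contain a cycle `C` (given by an
injective cyclic map `w : ZMod n → V`, `n ≥ 3`, with consecutive vertices adjacent)
all of whose vertices have degree 3 in `G`, such that `C` has a chord and at least one
vertex of `C` has a neighbor outside `C`. Then for every cover of `G` with lists of
size 3, any DP-3-coloring of `G − V(C)` extends to a DP-3-coloring of `G`. -/
theorem cycle_with_chord_reducible {V : Type} [Fintype V] (G : SimpleGraph V)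
    (n : ℕ) (hn : 3 ≤ n) (w : ZMod n → V) (hinj : Function.Injective w)
    (hcyc : ∀ i : ZMod n, G.Adj (w i) (w (i + 1)))
    (hdeg : ∀ i : ZMod n, (G.neighborSet (w i)).ncard = 3)
    (hchord : ∃ i j : ZMod n, G.Adj (w i) (w j) ∧ j ≠ i + 1 ∧ i ≠ j + 1)
    (hext : ∃ (i : ZMod n) (u : V), u ∉ Set.range w ∧ G.Adj (w i) u) :
    ∀ (C : DPCover G 3) (f₀ : V → Fin 3),
      (∀ u u' : V, u ≠ u' → u ∉ Set.range w → u' ∉ Set.range w →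
        ¬ C.H.Adj (u, f₀ u) (u', f₀ u')) →
      ∃ f : V → Fin 3, (∀ u : V, u ∉ Set.range w → f u = f₀ u) ∧ C.IsColoring f :=
  cycle_with_chord_reducible_general G n hn w hinj hcyc hdeg hchord hext
end

section
/- Two-subpath reducibility (used implicitly via Lemma 3): Let G be a graph with minimum degree 3 in which a cycle C = v_1 v_2 ... v_n consists entirely of degree-3 vertices of G, and suppose some vertex of C has a neighbor outside C, and C has a chord v_1 v_j. Then one of the two cycles v_1 v_2 ... v_j v_1 and v_1 v_j v_{j+1} ... v_n v_1 contains a vertex with a neighbor outside of V(C), and applying the extension lemma to the subgraph H = G[V(C)] ordered appropriately shows any DP-3-coloring of G − V(C) extends to G. -/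
open scoped Classical

section Aux

variable {V : Type} [Fintype V] {G : SimpleGraph V}

/-- at most one color of `v` conflicts with a fixed colored vertex `u`. -/
lemma conflict_ncard (C : DPCover G 3) (v u : V) (huv : u ≠ v) (cu : Fin 3) :
    {i : Fin 3 | C.H.Adj (v, i) (u, cu)}.ncard ≤ 1 := by
  rw [Set.ncard_le_one (Set.toFinite _)]
  intro a ha b hb
  exact C.matching₁ u v cu a b huv ha.symm hb.symm

/-- the per-position condition for greedy coloring: each vertex has at most two
neighbors that are colored at its turn (i.e. outside the reserved set `R` and the
still-to-come list `M`). -/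
def GreedyOk (G : SimpleGraph V) (R : Set V) : List V → Prop
  | [] => True
  | v :: M => (G.neighborSet v \ (R ∪ {u | u ∈ M})).ncard ≤ 2 ∧ GreedyOk G R M

lemma greedy (C : DPCover G 3) (R : Set V) :
    ∀ (M : List V) (f : V → Fin 3), GreedyOk G R M →
    (∀ u v : V, u ∉ R → u ∉ M → v ∉ R → v ∉ M → u ≠ v → ¬ C.H.Adj (u, f u) (v, f v)) →
    ∃ f' : V → Fin 3, (∀ v, v ∉ M → f' v = f v) ∧
      ∀ u v : V, u ∉ R → v ∉ R → u ≠ v → ¬ C.H.Adj (u, f' u) (v, f' v) := by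
  intro M
  induction M with
  | nil =>
      intro f _ hP
      exact ⟨f, fun _ _ => rfl, fun u v hu hv huv =>
        hP u v hu List.not_mem_nil hv List.not_mem_nil huv⟩
  | cons v M ih =>
      intro f hOk hP
      simp only [GreedyOk] at hOk
      obtain ⟨hc2, hOk'⟩ := hOk
      set D : Set V := G.neighborSet v \ (R ∪ {u | u ∈ M}) with hD
      set F : Set (Fin 3) := {i | ∃ u ∈ D, C.H.Adj (v, i) (u, f u)} with hF
      have hFcard : F.ncard ≤ 2 := by
        refine le_trans (Set.ncard_le_ncard_of_injOn
          (fun i => if h : ∃ u ∈ D, C.H.Adj (v, i) (u, f u) then h.choose else v)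
          ?_ ?_ (Set.toFinite _)) hc2
        · intro i hi
          have hi' : ∃ u ∈ D, C.H.Adj (v, i) (u, f u) := hi
          rw [dif_pos hi']
          exact hi'.choose_spec.1
        · intro a ha b hb hab
          have ha' : ∃ u ∈ D, C.H.Adj (v, a) (u, f u) := ha
          have hb' : ∃ u ∈ D, C.H.Adj (v, b) (u, f u) := hb
          dsimp only at hab
          rw [dif_pos ha', dif_pos hb'] at hab
          obtain ⟨haD, hadj1⟩ := ha'.choose_spec
          obtain ⟨hbD, hadj2⟩ := hb'.choose_spec
          have hne : ha'.choose ≠ v := (G.adj_symm haD.1).ne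
          have hadj2' : C.H.Adj (v, b) (ha'.choose, f ha'.choose) := by
            rw [hab]; exact hadj2
          exact C.matching₁ ha'.choose v (f ha'.choose) a b hne hadj1.symm hadj2'.symm
      have hFne : F ≠ Set.univ := by
        intro h
        rw [h, Set.ncard_univ] at hFcard
        simp [Nat.card_eq_fintype_card] at hFcard
      obtain ⟨c, hcF⟩ := (Set.ne_univ_iff_exists_notMem F).mp hFne
      set f1 := Function.update f v c with hf1
      have key : ∀ u' : V, u' ∉ R → u' ∉ M → u' ≠ v → ¬ C.H.Adj (v, c) (u', f u') := by
        intro u' hR hM hne hadj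
        by_cases hnb : u' ∈ G.neighborSet v
        · exact hcF ⟨u', ⟨hnb, fun hmem => hmem.elim hR hM⟩, hadj⟩
        · exact hnb (C.cross_adj v u' c (f u') (Ne.symm hne) hadj)
      have hP1 : ∀ u u' : V, u ∉ R → u ∉ M → u' ∉ R → u' ∉ M → u ≠ u' →
          ¬ C.H.Adj (u, f1 u) (u', f1 u') := by
        intro u u' hu huM hu' hu'M huu'
        by_cases huv : u = v
        · by_cases hu'v : u' = v
          · exact absurd (huv.trans hu'v.symm) huu'
          · subst huv
            rw [hf1, Function.update_self, Function.update_of_ne hu'v]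
            exact key u' hu' hu'M hu'v
        · rw [hf1, Function.update_of_ne huv]
          by_cases hu'v : u' = v
          · subst hu'v
            rw [Function.update_self]
            intro hadj
            exact key u hu huM huv hadj.symm
          · rw [Function.update_of_ne hu'v]
            exact hP u u'
              hu (fun h => (List.mem_cons.mp h).elim huv huM)
              hu' (fun h => (List.mem_cons.mp h).elim hu'v hu'M) huu'
      obtain ⟨f', hf'eq, hf'P⟩ := ih f1 hOk' hP1
      refine ⟨f', ?_, hf'P⟩
      intro u hu
      have h1 : u ∉ M := fun h => hu (List.mem_cons_of_mem _ h)
      have h2 : u ≠ v := fun h => hu (h ▸ List.mem_cons_self (a := v) (l := M))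
      rw [hf'eq u h1, hf1, Function.update_of_ne h2]


lemma okChain {n : ℕ} [NeZero n] (w : ZMod n → V) (R : Set V)
    (hthird : ∀ s : ZMod n, (G.neighborSet (w s) \ {w (s-1), w (s+1)}).ncard ≤ 1) :
    ∀ (m : ℕ) (a : ZMod n), w (a + (m : ZMod n)) ∈ R →
      GreedyOk G R ((List.range m).map (fun k : ℕ => w (a + (k : ZMod n)))) := by
  intro m
  induction m with
  | zero => intro a _; simp [GreedyOk]
  | succ m ih =>
      intro a ha
      rw [List.range_succ_eq_map, List.map_cons, List.map_map]
      have htail : ((fun k : ℕ => w (a + (k : ZMod n))) ∘ Nat.succ)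
          = fun k : ℕ => w ((a + 1) + (k : ZMod n)) := by
        funext k
        simp only [Function.comp_apply]
        congr 1
        push_cast
        ring
      rw [htail]
      simp only [GreedyOk]
      refine ⟨?_, ih (a + 1) ?_⟩
      · -- head bound
        have hsub : G.neighborSet (w (a + ((0:ℕ) : ZMod n))) \
            (R ∪ {u | u ∈ (List.range m).map (fun k : ℕ => w ((a+1) + (k : ZMod n)))}) ⊆
            insert (w (a - 1)) (G.neighborSet (w a) \ {w (a-1), w (a+1)}) := by
          intro u hu
          obtain ⟨hunb, hun⟩ := hu
          rw [show a + ((0:ℕ):ZMod n) = a by push_cast; ring] at hunb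
          by_cases h1 : u = w (a - 1)
          · exact Set.mem_insert_iff.mpr (Or.inl h1)
          · refine Set.mem_insert_of_mem _ ⟨hunb, ?_⟩
            intro hpair
            rcases Set.mem_insert_iff.mp hpair with h | h
            · exact h1 h
            · have h2 : u = w (a + 1) := Set.mem_singleton_iff.mp h
              rcases Nat.eq_zero_or_pos m with rfl | hm
              · refine hun (Or.inl ?_)
                rw [h2, show a + 1 = a + ((0+1 : ℕ) : ZMod n) by push_cast; ring]
                exact ha
              · refine hun (Or.inr (List.mem_map.mpr ⟨0, List.mem_range.mpr hm, ?_⟩))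
                rw [h2]
                congr 1
                push_cast
                ring
        calc (G.neighborSet (w (a + ((0:ℕ):ZMod n))) \
            (R ∪ {u | u ∈ (List.range m).map (fun k : ℕ => w ((a+1) + (k : ZMod n)))})).ncard
            ≤ (insert (w (a-1)) (G.neighborSet (w a) \ {w (a-1), w (a+1)})).ncard :=
              Set.ncard_le_ncard hsub (Set.toFinite _)
          _ ≤ (G.neighborSet (w a) \ {w (a-1), w (a+1)}).ncard + 1 := Set.ncard_insert_le _ _
          _ ≤ 2 := by have := hthird a; omega
      · have h3 : (a + 1) + ((m:ℕ) : ZMod n) = a + ((m+1 : ℕ) : ZMod n) := by push_cast; ring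
        rw [h3]
        exact ha

end Aux

/-- Two-subpath reducibility. Let `G` have minimum degree 3 and contain a cycle
`C = w 0, w 1, …, w (n-1)` (given by an injective cyclic map `w : ZMod n → V`) all of
whose vertices have degree exactly 3 in `G`, suppose some vertex of `C` has a neighbor
outside `C`, and suppose `C` has a chord `(w 0)(w j)`. Then one of the two cycles
`w 0, …, w j, w 0` and `w 0, w j, w (j+1), …, w (n-1), w 0` contains a vertex with a
neighbor outside `V(C)`, and any DP-3-coloring of `G − V(C)` extends to `G`. -/
theorem two_subpath_reducible {V : Type} [Fintype V] (G : SimpleGraph V)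
    (hmin : ∀ x : V, 3 ≤ (G.neighborSet x).ncard)
    (n : ℕ) (hn : 4 ≤ n) (w : ZMod n → V) (hinj : Function.Injective w)
    (hcyc : ∀ i : ZMod n, G.Adj (w i) (w (i + 1)))
    (hdeg : ∀ i : ZMod n, (G.neighborSet (w i)).ncard = 3)
    (hext : ∃ (i : ZMod n) (u : V), u ∉ Set.range w ∧ G.Adj (w i) u)
    (j : ZMod n) (hchord : G.Adj (w 0) (w j))
    (hj1 : j ≠ 1) (hj2 : j + 1 ≠ 0) (hj0 : j ≠ 0) :
    ((∃ i : ZMod n, i.val ≤ j.val ∧ ∃ u : V, u ∉ Set.range w ∧ G.Adj (w i) u) ∨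
     (∃ i : ZMod n, (i = 0 ∨ j.val ≤ i.val) ∧ ∃ u : V, u ∉ Set.range w ∧ G.Adj (w i) u))
    ∧
    (∀ (C : DPCover G 3) (f₀ : V → Fin 3),
      (∀ u u' : V, u ≠ u' → u ∉ Set.range w → u' ∉ Set.range w →
        ¬ C.H.Adj (u, f₀ u) (u', f₀ u')) →
      ∃ f : V → Fin 3, (∀ u : V, u ∉ Set.range w → f u = f₀ u) ∧ C.IsColoring f) := by
  constructor
  · obtain ⟨i, u, hu, hadj⟩ := hext
    by_cases h : i.val ≤ j.val
    · exact Or.inl ⟨i, h, u, hu, hadj⟩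
    · exact Or.inr ⟨i, Or.inr (not_le.mp h).le, u, hu, hadj⟩
  intro C f₀ h₀
  haveI : NeZero n := ⟨by omega⟩
  haveI : Fact (1 < n) := ⟨by omega⟩
  have hone : (1 : ZMod n) ≠ 0 := one_ne_zero
  have htwo : (2 : ZMod n) ≠ 0 := by
    intro h
    have h2 : ((2 : ℕ) : ZMod n) = 0 := by push_cast; exact h
    rw [ZMod.natCast_eq_zero_iff] at h2
    have := Nat.le_of_dvd (by norm_num) h2
    omega
  have hww : ∀ a b : ZMod n, a ≠ b → w a ≠ w b := fun a b h e => h (hinj e)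
  have hsp : ∀ a : ZMod n, a - 1 ≠ a + 1 := by
    intro a h; exact htwo (by linear_combination -h)
  have hsucc_ne : ∀ a : ZMod n, a + 1 ≠ a := by
    intro a h; exact hone (by linear_combination h)
  have hpred_ne : ∀ a : ZMod n, a - 1 ≠ a := by
    intro a h; exact hone (by linear_combination -h)
  have hmemp : ∀ s : ZMod n, w (s - 1) ∈ G.neighborSet (w s) := by
    intro s
    have h := hcyc (s - 1)
    rw [sub_add_cancel] at h
    exact h.symm
  have hmems : ∀ s : ZMod n, w (s + 1) ∈ G.neighborSet (w s) := fun s => hcyc s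
  have hthird : ∀ s : ZMod n, (G.neighborSet (w s) \ {w (s-1), w (s+1)}).ncard ≤ 1 := by
    intro s
    have hp : ({w (s-1), w (s+1)} : Set V) ⊆ G.neighborSet (w s) := by
      rintro u (rfl | rfl)
      exacts [hmemp s, hmems s]
    rw [Set.ncard_diff hp, hdeg s, Set.ncard_pair (hww _ _ (hsp s))]
  have hsub3 : ∀ (s : ZMod n) (x : V), G.Adj (w s) x → x ≠ w (s-1) → x ≠ w (s+1) →
      ∀ u, G.Adj (w s) u → u = w (s-1) ∨ u = w (s+1) ∨ u = x := by
    intro s x hx h1 h2 u hu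
    by_cases e1 : u = w (s-1)
    · exact Or.inl e1
    by_cases e2 : u = w (s+1)
    · exact Or.inr (Or.inl e2)
    refine Or.inr (Or.inr ?_)
    have hle := (Set.ncard_le_one (Set.toFinite _)).mp (hthird s)
    exact hle u ⟨hu, by simp [e1, e2]⟩ x ⟨hx, by simp [h1, h2]⟩
  have hrange0 : ∀ u, G.Adj (w 0) u → u ∈ Set.range w := by
    intro u hu
    have hj' : w j ≠ w (0 - 1) := hww _ _ (fun h => hj2 (by linear_combination h))
    have hj'' : w j ≠ w (0 + 1) := hww _ _ (fun h => hj1 (by linear_combination h))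
    rcases hsub3 0 (w j) hchord hj' hj'' u hu with h | h | h
    exacts [⟨0 - 1, h.symm⟩, ⟨0 + 1, h.symm⟩, ⟨j, h.symm⟩]
  have hdecomp : ∀ a s : ZMod n, ∃ k : ℕ, k < n ∧ s = a + (k : ZMod n) := by
    intro a s
    refine ⟨(s - a).val, ZMod.val_lt _, ?_⟩
    rw [ZMod.natCast_val, ZMod.cast_id]
    ring
  have hn1 : ((n - 1 : ℕ) : ZMod n) = -1 := by
    rw [Nat.cast_sub (by omega), ZMod.natCast_self, Nat.cast_one, zero_sub]
  have hn2 : ((n - 2 : ℕ) : ZMod n) = -2 := by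
    rw [Nat.cast_sub (by omega : 2 ≤ n), ZMod.natCast_self, zero_sub, Nat.cast_ofNat]
  by_cases hcase : ∃ (s : ZMod n) (x : V), x ∉ Set.range w ∧ G.Adj (w s) x ∧
      ∀ i : Fin 3, ¬ C.H.Adj (w s, i) (x, f₀ x)
  · -- Case I : some external neighbor forbids nothing
    obtain ⟨t, x, hxr, hxadj, hnoconf⟩ := hcase
    set M : List V := (List.range (n-1)).map (fun k : ℕ => w ((t+1) + (k : ZMod n))) with hM
    have hOk : GreedyOk G {w t} M := by
      refine okChain w {w t} hthird (n-1) (t+1) ?_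
      rw [hn1, show (t+1) + (-1 : ZMod n) = t by ring]
      rfl
    have hMrange : ∀ v ∈ M, v ∈ Set.range w := by
      intro v hv
      obtain ⟨k, -, rfl⟩ := List.mem_map.mp hv
      exact ⟨_, rfl⟩
    have hcover : ∀ s : ZMod n, w s = w t ∨ w s ∈ M := by
      intro s
      obtain ⟨k, hk, rfl⟩ := hdecomp (t+1) s
      by_cases hk' : k < n - 1
      · exact Or.inr (List.mem_map.mpr ⟨k, List.mem_range.mpr hk', rfl⟩)
      · have hke : k = n - 1 := by omega
        subst hke
        left
        rw [hn1, show (t+1) + (-1 : ZMod n) = t by ring]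
    have hnotrange : ∀ u : V, u ∉ ({w t} : Set V) → u ∉ M → u ∉ Set.range w := by
      rintro u h1 h2 ⟨s, rfl⟩
      rcases hcover s with h | h
      · exact h1 h
      · exact h2 h
    have hP0 : ∀ u v : V, u ∉ ({w t} : Set V) → u ∉ M → v ∉ ({w t} : Set V) → v ∉ M →
        u ≠ v → ¬ C.H.Adj (u, f₀ u) (v, f₀ v) := fun u v h1 h2 h3 h4 h5 =>
      h₀ u v h5 (hnotrange u h1 h2) (hnotrange v h3 h4)
    obtain ⟨f2, hf2eq, hf2P⟩ := greedy C {w t} M f₀ hOk hP0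
    have hxM : x ∉ M := fun h => hxr (hMrange x h)
    have hfx : f2 x = f₀ x := hf2eq x hxM
    set F : Set (Fin 3) := {i | C.H.Adj (w t, i) (w (t-1), f2 (w (t-1)))} ∪
        {i | C.H.Adj (w t, i) (w (t+1), f2 (w (t+1)))} with hF
    have hFc : F.ncard ≤ 2 := le_trans (Set.ncard_union_le _ _)
      (add_le_add (conflict_ncard C (w t) (w (t-1)) (hww _ _ (hpred_ne t)) _)
                  (conflict_ncard C (w t) (w (t+1)) (hww _ _ (hsucc_ne t)) _))
    have hFne : F ≠ Set.univ := by
      intro h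
      rw [h, Set.ncard_univ] at hFc
      simp [Nat.card_eq_fintype_card] at hFc
    obtain ⟨d, hd⟩ := (Set.ne_univ_iff_exists_notMem F).mp hFne
    set f := Function.update f2 (w t) d with hf
    have hfwt : f (w t) = d := by rw [hf]; exact Function.update_self _ _ _
    have hkey : ∀ v : V, v ≠ w t → ¬ C.H.Adj (w t, d) (v, f v) := by
      intro v hv hadj
      have hG : G.Adj (w t) v := C.cross_adj _ _ _ _ (Ne.symm hv) hadj
      have hx1 : x ≠ w (t-1) := fun h => hxr ⟨t-1, h.symm⟩
      have hx2 : x ≠ w (t+1) := fun h => hxr ⟨t+1, h.symm⟩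
      rcases hsub3 t x hxadj hx1 hx2 v hG with rfl | rfl | rfl
      · rw [hf, Function.update_of_ne hv] at hadj
        exact hd (Or.inl hadj)
      · rw [hf, Function.update_of_ne hv] at hadj
        exact hd (Or.inr hadj)
      · rw [hf, Function.update_of_ne hv, hfx] at hadj
        exact hnoconf d hadj
    refine ⟨f, ?_, ?_⟩
    · intro u hur
      have h1 : u ≠ w t := fun h => hur ⟨t, h.symm⟩
      rw [hf, Function.update_of_ne h1, hf2eq u (fun h => hur (hMrange u h))]
    · intro u v huv
      by_cases hu : u = w t
      · subst hu
        rw [hfwt]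
        exact hkey v (Ne.symm huv)
      · by_cases hv : v = w t
        · subst hv
          intro hadj
          rw [hfwt] at hadj
          exact hkey u hu hadj.symm
        · rw [hf, Function.update_of_ne hu, Function.update_of_ne hv]
          exact hf2P u v (by simp [hu]) (by simp [hv]) huv
  · -- Case II : every external neighbor forbids a color
    push_neg at hcase
    set T : Set (ZMod n) := {s | ∃ u, u ∉ Set.range w ∧ G.Adj (w s) u} with hT
    have hT0 : (0 : ZMod n) ∉ T := by
      rintro ⟨u, hu, hadj⟩
      exact hu (hrange0 u hadj)
    have hwalk : ∀ (k : ℕ) (s : ZMod n), s ∈ T → (s + (k : ZMod n)) ∉ T →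
        ∃ t, t ∈ T ∧ (t + 1) ∉ T := by
      intro k
      induction k with
      | zero => intro s hs hns; exact absurd hs (by simpa using hns)
      | succ k ih =>
          intro s hs hns
          by_cases h1 : (s + 1) ∈ T
          · refine ih (s+1) h1 ?_
            rw [show (s+1) + (k : ZMod n) = s + ((k+1 : ℕ) : ZMod n) by push_cast; ring]
            exact hns
          · exact ⟨s, hs, h1⟩
    obtain ⟨t₀, u₀, hu₀, hadj₀⟩ := hext
    obtain ⟨t, htT, htT1⟩ := hwalk (0 - t₀).val t₀ ⟨u₀, hu₀, hadj₀⟩ (by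
      rw [ZMod.natCast_val, ZMod.cast_id, show t₀ + (0 - t₀) = 0 by ring]
      exact hT0)
    obtain ⟨x, hxr, hxadj⟩ := htT
    obtain ⟨b, hb⟩ := hcase t x hxr hxadj
    have hxt : x ≠ w t := fun h => hxr ⟨t, h.symm⟩
    have hbu : ∀ i : Fin 3, C.H.Adj (w t, i) (x, f₀ x) → i = b :=
      fun i hi => C.matching₁ x (w t) (f₀ x) i b hxt hi.symm hb.symm
    have hwt1 : w t ≠ w (t+1) := hww _ _ (Ne.symm (hsucc_ne t))
    have hnb1 : ∀ u, G.Adj (w (t+1)) u → u ∈ Set.range w := by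
      intro u hu
      by_contra hr
      exact htT1 ⟨u, hr, hu⟩
    have hcex : ∃ c : Fin 3, ∀ i : Fin 3, C.H.Adj (w t, i) (w (t+1), c) → i = b := by
      by_contra hcon
      push_neg at hcon
      choose g hg hgne using hcon
      have hmaps : ∀ c ∈ (Finset.univ : Finset (Fin 3)), g c ∈ Finset.univ.erase b :=
        fun c _ => Finset.mem_erase.mpr ⟨hgne c, Finset.mem_univ _⟩
      have hcard : (Finset.univ.erase b).card < (Finset.univ : Finset (Fin 3)).card := by
        rw [Finset.card_erase_of_mem (Finset.mem_univ b)]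
        simp
      obtain ⟨c1, -, c2, -, hne, heq⟩ :=
        Finset.exists_ne_map_eq_of_card_lt_of_maps_to hcard hmaps
      have h2 : C.H.Adj (w t, g c1) (w (t+1), c2) := by rw [heq]; exact hg c2
      exact hne (C.matching₁ (w t) (w (t+1)) (g c1) c1 c2 hwt1 (hg c1) h2)
    obtain ⟨c, hc⟩ := hcex
    set f1 := Function.update f₀ (w (t+1)) c with hf1
    set M : List V := (List.range (n-2)).map (fun k : ℕ => w ((t+2) + (k : ZMod n))) with hM
    have hOk : GreedyOk G {w t} M := by
      refine okChain w {w t} hthird (n-2) (t+2) ?_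
      rw [hn2, show (t+2) + (-2 : ZMod n) = t by ring]
      rfl
    have hMrange : ∀ v ∈ M, v ∈ Set.range w := by
      intro v hv
      obtain ⟨k, -, rfl⟩ := List.mem_map.mp hv
      exact ⟨_, rfl⟩
    have hcover : ∀ s : ZMod n, w s = w t ∨ w s = w (t+1) ∨ w s ∈ M := by
      intro s
      obtain ⟨k, hk, rfl⟩ := hdecomp (t+2) s
      by_cases hk' : k < n - 2
      · exact Or.inr (Or.inr (List.mem_map.mpr ⟨k, List.mem_range.mpr hk', rfl⟩))
      · by_cases hk'' : k = n - 2
        · subst hk''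
          left
          rw [hn2, show (t+2) + (-2 : ZMod n) = t by ring]
        · have hke : k = n - 1 := by omega
          subst hke
          right; left
          rw [hn1, show (t+2) + (-1 : ZMod n) = t + 1 by ring]
    have hnotrange : ∀ u : V, u ∉ ({w t} : Set V) → u ∉ M → u ≠ w (t+1) →
        u ∉ Set.range w := by
      rintro u h1 h2 h3 ⟨s, rfl⟩
      rcases hcover s with h | h | h
      · exact h1 h
      · exact h3 h
      · exact h2 h
    have hw1M : w (t+1) ∉ M := by
      intro h
      obtain ⟨k, hk, he⟩ := List.mem_map.mp h
      have hk' := List.mem_range.mp hk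
      have hkz : ((k + 1 : ℕ) : ZMod n) = 0 := by push_cast; linear_combination (hinj he)
      rw [ZMod.natCast_eq_zero_iff] at hkz
      have := Nat.le_of_dvd (by omega) hkz
      omega
    have hP0 : ∀ u v : V, u ∉ ({w t} : Set V) → u ∉ M → v ∉ ({w t} : Set V) → v ∉ M →
        u ≠ v → ¬ C.H.Adj (u, f1 u) (v, f1 v) := by
      have key1 : ∀ v : V, v ∉ Set.range w → ¬ C.H.Adj (w (t+1), c) (v, f₀ v) := by
        intro v hv hadj
        have hne : w (t+1) ≠ v := fun h => hv ⟨t+1, h⟩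
        exact hv (hnb1 v (C.cross_adj _ _ _ _ hne hadj))
      intro u v h1 h2 h3 h4 h5
      by_cases hu1 : u = w (t+1)
      · subst hu1
        by_cases hv1 : v = w (t+1)
        · exact absurd hv1.symm h5
        · rw [hf1, Function.update_self, Function.update_of_ne hv1]
          exact key1 v (hnotrange v h3 h4 hv1)
      · rw [hf1, Function.update_of_ne hu1]
        by_cases hv1 : v = w (t+1)
        · subst hv1
          rw [Function.update_self]
          intro hadj
          exact key1 u (hnotrange u h1 h2 hu1) hadj.symm
        · rw [Function.update_of_ne hv1]
          exact h₀ u v h5 (hnotrange u h1 h2 hu1) (hnotrange v h3 h4 hv1)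
    obtain ⟨f2, hf2eq, hf2P⟩ := greedy C {w t} M f1 hOk hP0
    have hf2w1 : f2 (w (t+1)) = c := by
      rw [hf2eq _ hw1M, hf1, Function.update_self]
    have hxM : x ∉ M := fun h => hxr (hMrange x h)
    have hxw1 : x ≠ w (t+1) := fun h => hxr ⟨t+1, h.symm⟩
    have hfx2 : f2 x = f₀ x := by
      rw [hf2eq x hxM, hf1, Function.update_of_ne hxw1]
    set F : Set (Fin 3) := {i | C.H.Adj (w t, i) (w (t-1), f2 (w (t-1)))} ∪ {b} with hF
    have hFc : F.ncard ≤ 2 := le_trans (Set.ncard_union_le _ _)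
      (add_le_add (conflict_ncard C (w t) (w (t-1)) (hww _ _ (hpred_ne t)) _)
        (le_of_eq (Set.ncard_singleton b)))
    have hFne : F ≠ Set.univ := by
      intro h
      rw [h, Set.ncard_univ] at hFc
      simp [Nat.card_eq_fintype_card] at hFc
    obtain ⟨d, hd⟩ := (Set.ne_univ_iff_exists_notMem F).mp hFne
    set f := Function.update f2 (w t) d with hf
    have hfwt : f (w t) = d := by rw [hf]; exact Function.update_self _ _ _
    have hkey : ∀ v : V, v ≠ w t → ¬ C.H.Adj (w t, d) (v, f v) := by
      intro v hv hadj
      have hG : G.Adj (w t) v := C.cross_adj _ _ _ _ (Ne.symm hv) hadj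
      have hx1 : x ≠ w (t-1) := fun h => hxr ⟨t-1, h.symm⟩
      rcases hsub3 t x hxadj hx1 hxw1 v hG with rfl | rfl | rfl
      · rw [hf, Function.update_of_ne hv] at hadj
        exact hd (Or.inl hadj)
      · rw [hf, Function.update_of_ne hv, hf2w1] at hadj
        exact hd (Or.inr (hc d hadj))
      · rw [hf, Function.update_of_ne hv, hfx2] at hadj
        exact hd (Or.inr (hbu d hadj))
    refine ⟨f, ?_, ?_⟩
    · intro u hur
      have h1 : u ≠ w t := fun h => hur ⟨t, h.symm⟩
      have h2 : u ∉ M := fun h => hur (hMrange u h)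
      have h3 : u ≠ w (t+1) := fun h => hur ⟨t+1, h.symm⟩
      rw [hf, Function.update_of_ne h1, hf2eq u h2, hf1, Function.update_of_ne h3]
    · intro u v huv
      by_cases hu : u = w t
      · subst hu
        rw [hfwt]
        exact hkey v (Ne.symm huv)
      · by_cases hv : v = w t
        · subst hv
          intro hadj
          rw [hfwt] at hadj
          exact hkey u hu hadj.symm
        · rw [hf, Function.update_of_ne hu, Function.update_of_ne hv]
          exact hf2P u v (by simp [hu]) (by simp [hv]) huv
end
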